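/- Define c̃(ρ) = (erf⁻¹(ρ))² on (0,1). Then for all ρ ∈ (0,1), ρ·c̃'(ρ) - c̃(ρ) > 0, and the function ρ ↦ ρ·c̃'(ρ) - c̃(ρ) is strictly increasing on (0,1). -/

import Mathlib

/-! The substitution `x = erf⁻¹ ρ` turns the gap into `G x = √π x e^{x²} erf x - x²` (`erfGap`),
because `c̃'(ρ) = 2x / erf'(x) = √π x e^{x²}`. Then `G 0 = 0` and
`G' x = √π e^{x²} (1 + 2x²) erf x > 0` for `x > 0`, so `G` is strictly increasing on `[0, ∞)`;
composing with the increasing map `erf⁻¹ : (0, 1) → (0, ∞)` gives both claims. -/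

/-- The Gaussian error function `erf z = (2/√π) ∫₀^z e^{-t²} dt`. -/
noncomputable def erf (z : ℝ) : ℝ :=
  (2 / Real.sqrt Real.pi) * ∫ t in (0:ℝ)..z, Real.exp (-t ^ 2)

/-- The inverse of the Gaussian error function. -/
noncomputable def erfInv : ℝ → ℝ := Function.invFun erf

/-- The cost function . -/
noncomputable def ctilde (ρ : ℝ) : ℝ := erfInv ρ ^ 2

open Real Filter Topology Set MeasureTheory

lemma hasStrictDerivAt_erf (x : ℝ) : HasStrictDerivAt erf (2 / √π * exp (-x ^ 2)) x :=
  ((by fun_prop : Continuous fun t : ℝ => exp (-t ^ 2)).integral_hasStrictDerivAt 0 x).const_mul _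

lemma continuous_erf : Continuous erf :=
  continuous_iff_continuousAt.2 fun x => (hasStrictDerivAt_erf x).hasDerivAt.continuousAt

lemma erf_strictMono : StrictMono erf :=
  strictMono_of_deriv_pos fun x => by
    rw [(hasStrictDerivAt_erf x).hasDerivAt.deriv]
    positivity

@[simp] lemma erf_zero : erf 0 = 0 := by simp [erf]

lemma erf_pos {x : ℝ} (hx : 0 < x) : 0 < erf x := erf_zero ▸ erf_strictMono hx

lemma tendsto_erf_atTop : Tendsto erf atTop (𝓝 1) := by
  have hint : IntegrableOn (fun t : ℝ => exp (-t ^ 2)) (Ioi 0) := by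
    simpa using (integrable_exp_neg_mul_sq one_pos).integrableOn
  have hhalf : ∫ t in Ioi (0:ℝ), exp (-t ^ 2) = √π / 2 := by
    simpa using integral_gaussian_Ioi 1
  have h := (intervalIntegral_tendsto_integral_Ioi 0 hint tendsto_id).const_mul (2 / √π)
  rwa [hhalf, div_mul_div_cancel₀ (by positivity), div_self two_ne_zero] at h

lemma surjOn_erf : SurjOn erf (Ioi 0) (Ioo 0 1) := by
  intro ρ hρ
  obtain ⟨z, hz⟩ := (tendsto_erf_atTop.eventually_const_lt hρ.2).exists
  have hz₀ : 0 < z := erf_strictMono.lt_iff_lt.1 (by rw [erf_zero]; exact hρ.1.trans hz)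
  obtain ⟨x, hx, rfl⟩ :=
    intermediate_value_Ioo hz₀.le continuous_erf.continuousOn (by simpa using ⟨hρ.1, hz⟩)
  exact ⟨x, hx.1, rfl⟩

lemma erfInv_erf (x : ℝ) : erfInv (erf x) = x :=
  Function.leftInverse_invFun erf_strictMono.injective x

lemma erf_erfInv {ρ : ℝ} (hρ : ρ ∈ Ioo 0 1) : erf (erfInv ρ) = ρ :=
  Function.invFun_eq ((surjOn_erf hρ).imp fun _ => And.right)

lemma erfInv_pos {ρ : ℝ} (hρ : ρ ∈ Ioo 0 1) : 0 < erfInv ρ :=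
  erf_strictMono.lt_iff_lt.1 (by rw [erf_zero, erf_erfInv hρ]; exact hρ.1)

lemma hasStrictDerivAt_erfInv {ρ : ℝ} (hρ : ρ ∈ Ioo 0 1) :
    HasStrictDerivAt erfInv (√π / 2 * exp (erfInv ρ ^ 2)) ρ := by
  have h := (hasStrictDerivAt_erf (erfInv ρ)).to_local_left_inverse (by positivity)
    (Eventually.of_forall erfInv_erf)
  rwa [erf_erfInv hρ, mul_inv, inv_div, ← exp_neg, neg_neg] at h

lemma hasDerivAt_ctilde {ρ : ℝ} (hρ : ρ ∈ Ioo 0 1) :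
    HasDerivAt ctilde (√π * erfInv ρ * exp (erfInv ρ ^ 2)) ρ :=
  ((hasStrictDerivAt_erfInv hρ).hasDerivAt.pow 2).congr_deriv (by norm_num; ring)

lemma strictMonoOn_erfInv : StrictMonoOn erfInv (Ioo 0 1) := fun a ha b hb hab =>
  erf_strictMono.lt_iff_lt.1 (by rwa [erf_erfInv ha, erf_erfInv hb])

noncomputable def erfGap (x : ℝ) : ℝ := √π * x * exp (x ^ 2) * erf x - x ^ 2

lemma erfGap_zero : erfGap 0 = 0 := by simp [erfGap]

lemma hasDerivAt_erfGap (x : ℝ) :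
    HasDerivAt erfGap (√π * exp (x ^ 2) * (1 + 2 * x ^ 2) * erf x) x := by
  have h := ((((hasDerivAt_id' x).const_mul √π).fun_mul (hasDerivAt_pow 2 x).exp).fun_mul
    (hasStrictDerivAt_erf x).hasDerivAt).fun_sub (hasDerivAt_pow 2 x)
  refine h.congr_deriv ?_
  have hexp : exp (x ^ 2) * exp (-x ^ 2) = 1 := by rw [← exp_add]; simp
  field_simp
  linear_combination 2 * x * hexp

lemma strictMonoOn_erfGap : StrictMonoOn erfGap (Ici 0) := by
  refine strictMonoOn_of_deriv_pos (convex_Ici 0)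
    (fun x _ => (hasDerivAt_erfGap x).continuousAt.continuousWithinAt) fun x hx => ?_
  rw [interior_Ici] at hx
  rw [(hasDerivAt_erfGap x).deriv]
  have := erf_pos hx
  positivity

lemma ctilde_gap_eq {ρ : ℝ} (hρ : ρ ∈ Ioo 0 1) :
    ρ * deriv ctilde ρ - ctilde ρ = erfGap (erfInv ρ) := by
  rw [(hasDerivAt_ctilde hρ).deriv, erfGap, ctilde, erf_erfInv hρ]
  ring

/--  on , and  is strictly increasing. -/
theorem ctilde_marginal_gap :
    (∀ ρ ∈ Set.Ioo (0:ℝ) 1, 0 < ρ * deriv ctilde ρ - ctilde ρ) ∧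
    StrictMonoOn (fun ρ => ρ * deriv ctilde ρ - ctilde ρ) (Set.Ioo (0:ℝ) 1) := by
  have hmaps : MapsTo erfInv (Ioo 0 1) (Ici 0) := fun ρ hρ => (erfInv_pos hρ).le
  refine ⟨fun ρ hρ => ?_, ?_⟩
  · rw [ctilde_gap_eq hρ, ← erfGap_zero]
    exact strictMonoOn_erfGap (mem_Ici.2 le_rfl) (hmaps hρ) (erfInv_pos hρ)
  · exact (strictMonoOn_erfGap.comp strictMonoOn_erfInv hmaps).congr
      fun ρ hρ => (ctilde_gap_eq hρ).symm
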